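/- arXiv:2410.23938 — 4 statements merged into one kernel-verified Lean document; each statement's English description precedes it below -/
import Mathlib

section
/- Let 0 < b1 ≤ b2 and let K ≥ 1. For each k = 1,…,K let A_k ∈ ℝ^{d×N} be a real matrix such that for every v ∈ ℝ^d one has b1‖v‖² ≤ ⟪A_k A_kᵀ v, v⟫ ≤ b2‖v‖² (in particular A_k A_kᵀ is invertible), and let B_k := A_kᵀ (A_k A_kᵀ)⁻¹. Fix vectors y_1,…,y_K ∈ ℝ^N and define, for any choice of vectors g_1,…,g_K ∈ ℝ^d, the losses L_z := (1/K) Σ_{k=1}^K ‖A_k y_k − g_k‖² and L_x := (1/K) Σ_{k=1}^K ‖y_k − B_k g_k‖², and the constant C := −(1/K) Σ_{k=1}^K ‖y_k − B_k (A_k y_k)‖² (which does not depend on g_1,…,g_K). Then for every choice of g_1,…,g_K: b1 (L_x + C) ≤ L_z ≤ b2 (L_x + C). -/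
open Matrix BigOperators

/-- Cauchy–Schwarz for a symmetric positive semidefinite quadratic form. -/
lemma psd_cs {d : ℕ} (M : Matrix (Fin d) (Fin d) ℝ)
    (hsymm : ∀ x z : Fin d → ℝ, (M *ᵥ x) ⬝ᵥ z = (M *ᵥ z) ⬝ᵥ x)
    (hpsd : ∀ v, 0 ≤ (M *ᵥ v) ⬝ᵥ v) (x z : Fin d → ℝ) :
    ((M *ᵥ x) ⬝ᵥ z) ^ 2 ≤ ((M *ᵥ x) ⬝ᵥ x) * ((M *ᵥ z) ⬝ᵥ z) := by
  have h := discrim_le_zero (a := (M *ᵥ z) ⬝ᵥ z) (b := 2 * ((M *ᵥ x) ⬝ᵥ z))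
      (c := (M *ᵥ x) ⬝ᵥ x) ?_
  · rw [discrim] at h
    nlinarith [h]
  · intro t
    have h0 := hpsd (x + t • z)
    have hzx := hsymm z x
    simp only [mulVec_add, mulVec_smul, dotProduct_add, add_dotProduct,
      smul_dotProduct, dotProduct_smul, smul_eq_mul] at h0
    rw [hsymm z x] at h0
    nlinarith [h0]

/-- Per-sample key lemma. -/
lemma key_lemma {d N : ℕ} (b1 b2 : ℝ) (hb1 : 0 < b1) (hb12 : b1 ≤ b2)
    (A : Matrix (Fin d) (Fin N) ℝ)
    (hlo : ∀ v, b1 * (∑ i, v i ^ 2) ≤ ((A * Aᵀ) *ᵥ v) ⬝ᵥ v)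
    (hhi : ∀ v, ((A * Aᵀ) *ᵥ v) ⬝ᵥ v ≤ b2 * (∑ i, v i ^ 2))
    (y : Fin N → ℝ) (g : Fin d → ℝ) :
    b1 * ((∑ j, (y j - ((Aᵀ * (A * Aᵀ)⁻¹) *ᵥ g) j) ^ 2)
        - ∑ j, (y j - ((Aᵀ * (A * Aᵀ)⁻¹) *ᵥ (A *ᵥ y)) j) ^ 2)
      ≤ ∑ i, ((A *ᵥ y) i - g i) ^ 2 ∧
    (∑ i, ((A *ᵥ y) i - g i) ^ 2)
      ≤ b2 * ((∑ j, (y j - ((Aᵀ * (A * Aᵀ)⁻¹) *ᵥ g) j) ^ 2)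
        - ∑ j, (y j - ((Aᵀ * (A * Aᵀ)⁻¹) *ᵥ (A *ᵥ y)) j) ^ 2) := by
  set M := A * Aᵀ with hM
  have hMsymm : Mᵀ = M := by rw [hM, transpose_mul, transpose_transpose]
  have hdsymm : ∀ x z : Fin d → ℝ, (M *ᵥ x) ⬝ᵥ z = (M *ᵥ z) ⬝ᵥ x := by
    intro x z
    rw [dotProduct_comm, dotProduct_mulVec, ← mulVec_transpose, hMsymm, dotProduct_comm]
  have hpsd : ∀ v, 0 ≤ (M *ᵥ v) ⬝ᵥ v := fun v =>
    le_trans (by positivity) (hlo v)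
  -- invertibility
  have hUnit : IsUnit M := by
    rw [← mulVec_injective_iff_isUnit]
    intro v w hvw
    have h0 : M *ᵥ (v - w) = 0 := by rw [mulVec_sub, hvw, sub_self]
    have hle := hlo (v - w)
    rw [h0] at hle
    simp only [zero_dotProduct] at hle
    have hsum0 : ∑ i, (v - w) i ^ 2 = 0 := by
      have hnn : (0:ℝ) ≤ ∑ i, (v - w) i ^ 2 := Finset.sum_nonneg fun i _ => sq_nonneg _
      nlinarith
    have hz := (Finset.sum_eq_zero_iff_of_nonneg (fun i _ => sq_nonneg ((v - w) i))).1 hsum0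
    funext i
    have := hz i (Finset.mem_univ i)
    have h2 : (v - w) i = 0 := by
      have := sq_eq_zero_iff.1 this
      simpa using this
    simpa [sub_eq_zero] using h2
  have hdet : IsUnit M.det := (isUnit_iff_isUnit_det M).1 hUnit
  have hMMinv : M * M⁻¹ = 1 := mul_nonsing_inv M hdet
  set r : Fin d → ℝ := (A *ᵥ y) - g with hr
  set w : Fin d → ℝ := M⁻¹ *ᵥ r with hw
  have hMw : M *ᵥ w = r := by rw [hw, mulVec_mulVec, hMMinv, one_mulVec]
  set q : ℝ := (M *ᵥ w) ⬝ᵥ w with hq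
  set e : Fin N → ℝ := y - (Aᵀ * M⁻¹) *ᵥ (A *ᵥ y) with he
  set f : Fin N → ℝ := Aᵀ *ᵥ w with hf
  -- decomposition
  have hdecomp : (y - (Aᵀ * M⁻¹) *ᵥ g) = e + f := by
    have hg : g = A *ᵥ y - r := by rw [hr]; abel
    rw [hg, mulVec_sub, he, hf, hw]
    abel_nf
    simp [mulVec_mulVec]
  -- orthogonality
  have hAe : A *ᵥ e = 0 := by
    rw [he, mulVec_sub, mulVec_mulVec, ← Matrix.mul_assoc, ← hM, hMMinv,
      one_mulVec, sub_self]
  have hef : e ⬝ᵥ f = 0 := by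
    rw [hf, dotProduct_mulVec, vecMul_transpose, hAe, zero_dotProduct]
  have hff : f ⬝ᵥ f = q := by
    rw [hq, hf, dotProduct_mulVec, vecMul_transpose, mulVec_mulVec, ← hM]
  -- the microscopic loss difference equals q
  have hdiff : (∑ j, (y j - ((Aᵀ * M⁻¹) *ᵥ g) j) ^ 2)
      - (∑ j, (y j - ((Aᵀ * M⁻¹) *ᵥ (A *ᵥ y)) j) ^ 2) = q := by
    have h1 : ∑ j, (y j - ((Aᵀ * M⁻¹) *ᵥ g) j) ^ 2 = (e + f) ⬝ᵥ (e + f) := by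
      rw [← hdecomp]; simp [dotProduct, pow_two]
    have h2 : ∑ j, (y j - ((Aᵀ * M⁻¹) *ᵥ (A *ᵥ y)) j) ^ 2 = e ⬝ᵥ e := by
      rw [he]; simp [dotProduct, pow_two]
    rw [h1, h2, dotProduct_add, add_dotProduct, add_dotProduct, hef, hff,
      dotProduct_comm f e, hef]
    ring
  have ht : ∑ i, ((A *ᵥ y) i - g i) ^ 2 = r ⬝ᵥ r := by
    rw [hr]; simp [dotProduct, pow_two]
  rw [hdiff, ht]
  -- now prove b1 * q ≤ r ⬝ᵥ r ≤ b2 * q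
  have hq0 : 0 ≤ q := hpsd w
  have ht0 : 0 ≤ r ⬝ᵥ r := by
    rw [← ht]; exact Finset.sum_nonneg fun i _ => sq_nonneg _
  have hqrw : q = r ⬝ᵥ w := by rw [hq, hMw]
  have hww : b1 * (w ⬝ᵥ w) ≤ q := by
    have := hlo w
    rw [hMw] at this
    rw [hqrw]
    calc b1 * (w ⬝ᵥ w) = b1 * ∑ i, w i ^ 2 := by simp [dotProduct, pow_two]
    _ ≤ r ⬝ᵥ w := this
  have hww0 : 0 ≤ w ⬝ᵥ w := by
    have : (0:ℝ) ≤ ∑ i, w i ^ 2 := Finset.sum_nonneg fun i _ => sq_nonneg _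
    simpa [dotProduct, pow_two] using this
  constructor
  · -- b1 * q ≤ r ⬝ᵥ r  via Euclidean Cauchy–Schwarz
    have hcs := psd_cs (1 : Matrix (Fin d) (Fin d) ℝ)
      (fun x z => by simp [one_mulVec, dotProduct_comm])
      (fun v => by
        have : (0:ℝ) ≤ ∑ i, v i ^ 2 := Finset.sum_nonneg fun i _ => sq_nonneg _
        simpa [one_mulVec, dotProduct, pow_two] using this) r w
    simp only [one_mulVec] at hcs
    rw [← hqrw] at hcs
    rcases hq0.eq_or_lt with hq' | hq'
    · rw [← hq']; simpa using ht0
    · nlinarith [mul_le_mul_of_nonneg_left hcs hb1.le,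
        mul_le_mul_of_nonneg_left hww ht0, hq', ht0, hb1]
  · -- r ⬝ᵥ r ≤ b2 * q
    have hcs := psd_cs M hdsymm hpsd w r
    rw [hMw] at hcs
    have hhir := hhi r
    have hrr : b2 * ∑ i, r i ^ 2 = b2 * (r ⬝ᵥ r) := by simp [dotProduct, pow_two]
    rw [hrr] at hhir
    rw [← hqrw] at hcs
    have hb2 : 0 < b2 := lt_of_lt_of_le hb1 hb12
    rcases ht0.eq_or_lt with ht' | ht'
    · rw [← ht']
      exact mul_nonneg hb2.le hq0
    · nlinarith [mul_le_mul_of_nonneg_left hhir hq0, hcs, ht', hq0]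

/-- **Theorem 1 of the paper.** For matrices `A k` whose Gram matrices `A k * (A k)ᵀ` have
quadratic form bounded between `b1` and `b2`, the macroscopic loss `Lz` is sandwiched, up to a
`g`-independent constant `C`, between `b1` and `b2` times the microscopic loss `Lx`. -/
theorem stmt_0 {d N K : ℕ} (hK : 1 ≤ K)
    (b1 b2 : ℝ) (hb1 : 0 < b1) (hb12 : b1 ≤ b2)
    (A : Fin K → Matrix (Fin d) (Fin N) ℝ)
    (hA : ∀ (k : Fin K) (v : Fin d → ℝ),
      b1 * (∑ i, v i ^ 2) ≤ ((A k * (A k)ᵀ) *ᵥ v) ⬝ᵥ v ∧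
      ((A k * (A k)ᵀ) *ᵥ v) ⬝ᵥ v ≤ b2 * (∑ i, v i ^ 2))
    (B : Fin K → Matrix (Fin N) (Fin d) ℝ)
    (hB : ∀ k, B k = (A k)ᵀ * (A k * (A k)ᵀ)⁻¹)
    (y : Fin K → Fin N → ℝ)
    (C : ℝ)
    (hC : C = -((1 : ℝ) / K) * ∑ k, ∑ j, (y k j - (B k *ᵥ (A k *ᵥ y k)) j) ^ 2) :
    ∀ g : Fin K → Fin d → ℝ,
      b1 * (((1 : ℝ) / K) * (∑ k, ∑ j, (y k j - (B k *ᵥ g k) j) ^ 2) + C)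
        ≤ ((1 : ℝ) / K) * ∑ k, ∑ i, ((A k *ᵥ y k) i - g k i) ^ 2 ∧
      ((1 : ℝ) / K) * ∑ k, ∑ i, ((A k *ᵥ y k) i - g k i) ^ 2
        ≤ b2 * (((1 : ℝ) / K) * (∑ k, ∑ j, (y k j - (B k *ᵥ g k) j) ^ 2) + C) := by
  intro g
  have hkey : ∀ k : Fin K,
      b1 * ((∑ j, (y k j - (B k *ᵥ g k) j) ^ 2)
          - ∑ j, (y k j - (B k *ᵥ (A k *ᵥ y k)) j) ^ 2)
        ≤ ∑ i, ((A k *ᵥ y k) i - g k i) ^ 2 ∧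
      (∑ i, ((A k *ᵥ y k) i - g k i) ^ 2)
        ≤ b2 * ((∑ j, (y k j - (B k *ᵥ g k) j) ^ 2)
          - ∑ j, (y k j - (B k *ᵥ (A k *ᵥ y k)) j) ^ 2) := by
    intro k
    rw [hB k]
    exact key_lemma b1 b2 hb1 hb12 (A k) (fun v => (hA k v).1) (fun v => (hA k v).2)
      (y k) (g k)
  have hKnn : (0:ℝ) ≤ 1 / K := by positivity
  have hsum1 : ∑ k, b1 * ((∑ j, (y k j - (B k *ᵥ g k) j) ^ 2)
      - ∑ j, (y k j - (B k *ᵥ (A k *ᵥ y k)) j) ^ 2)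
      ≤ ∑ k, ∑ i, ((A k *ᵥ y k) i - g k i) ^ 2 :=
    Finset.sum_le_sum fun k _ => (hkey k).1
  have hsum2 : ∑ k, ∑ i, ((A k *ᵥ y k) i - g k i) ^ 2
      ≤ ∑ k, b2 * ((∑ j, (y k j - (B k *ᵥ g k) j) ^ 2)
      - ∑ j, (y k j - (B k *ᵥ (A k *ᵥ y k)) j) ^ 2) :=
    Finset.sum_le_sum fun k _ => (hkey k).2
  have hd1 : ∀ b : ℝ, ∑ k, b * ((∑ j, (y k j - (B k *ᵥ g k) j) ^ 2)
      - ∑ j, (y k j - (B k *ᵥ (A k *ᵥ y k)) j) ^ 2)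
      = b * ((∑ k, ∑ j, (y k j - (B k *ᵥ g k) j) ^ 2)
        - ∑ k, ∑ j, (y k j - (B k *ᵥ (A k *ᵥ y k)) j) ^ 2) := by
    intro b
    rw [← Finset.mul_sum, Finset.sum_sub_distrib]
  constructor
  · have h2 := mul_le_mul_of_nonneg_left hsum1 hKnn
    rw [hd1 b1] at h2
    calc b1 * (((1 : ℝ) / K) * (∑ k, ∑ j, (y k j - (B k *ᵥ g k) j) ^ 2) + C)
        = (1 / K) * (b1 * ((∑ k, ∑ j, (y k j - (B k *ᵥ g k) j) ^ 2)
          - ∑ k, ∑ j, (y k j - (B k *ᵥ (A k *ᵥ y k)) j) ^ 2)) := by rw [hC]; ring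
      _ ≤ (1 / K) * ∑ k, ∑ i, ((A k *ᵥ y k) i - g k i) ^ 2 := h2
  · have h2 := mul_le_mul_of_nonneg_left hsum2 hKnn
    rw [hd1 b2] at h2
    calc ((1 : ℝ) / K) * ∑ k, ∑ i, ((A k *ᵥ y k) i - g k i) ^ 2
        ≤ (1 / K) * (b2 * ((∑ k, ∑ j, (y k j - (B k *ᵥ g k) j) ^ 2)
          - ∑ k, ∑ j, (y k j - (B k *ᵥ (A k *ᵥ y k)) j) ^ 2)) := h2
      _ = b2 * (((1 : ℝ) / K) * (∑ k, ∑ j, (y k j - (B k *ᵥ g k) j) ^ 2) + C) := by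
          rw [hC]; ring
end

section
/- Let 0 < b1 ≤ b2 and let A ∈ ℝ^{d×N} be a real matrix such that for every v ∈ ℝ^d one has b1‖v‖² ≤ ⟪A Aᵀ v, v⟫ ≤ b2‖v‖² (in particular A Aᵀ is invertible), and let B := Aᵀ (A Aᵀ)⁻¹. Then for all y ∈ ℝ^N and g ∈ ℝ^d: b1 (‖y − B g‖² − ‖y − B (A y)‖²) ≤ ‖A y − g‖² ≤ b2 (‖y − B g‖² − ‖y − B (A y)‖²). -/
open Matrix BigOperators

private lemma dot_sq_eq {n : ℕ} (v : Fin n → ℝ) : v ⬝ᵥ v = ∑ i, v i ^ 2 := by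
  simp [dotProduct, pow_two]

private lemma dot_self_nonneg {n : ℕ} (v : Fin n → ℝ) : 0 ≤ v ⬝ᵥ v := by
  rw [dot_sq_eq]; positivity

private lemma cs {n : ℕ} (x y : Fin n → ℝ) : (x ⬝ᵥ y) ^ 2 ≤ (x ⬝ᵥ x) * (y ⬝ᵥ y) := by
  simpa [dotProduct, pow_two, Finset.mul_sum, mul_comm, mul_left_comm] using
    Finset.sum_mul_sq_le_sq_mul_sq Finset.univ x y

private lemma op_bound {d N : ℕ} (b2 : ℝ) (hb2 : 0 ≤ b2) (A : Matrix (Fin d) (Fin N) ℝ)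
    (hAhi : ∀ v : Fin d → ℝ, ((A * Aᵀ) *ᵥ v) ⬝ᵥ v ≤ b2 * (v ⬝ᵥ v)) :
    ∀ w : Fin N → ℝ, (A *ᵥ w) ⬝ᵥ (A *ᵥ w) ≤ b2 * (w ⬝ᵥ w) := by
  intro w
  obtain ⟨z, hz⟩ : ∃ z, z = A *ᵥ w := ⟨_, rfl⟩
  rw [← hz]
  have h1 : z ⬝ᵥ z = (Aᵀ *ᵥ z) ⬝ᵥ w := by
    rw [hz, Matrix.mulVec_transpose, ← Matrix.dotProduct_mulVec, ← hz, dotProduct_comm]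
  have h2 : (Aᵀ *ᵥ z) ⬝ᵥ (Aᵀ *ᵥ z) = ((A * Aᵀ) *ᵥ z) ⬝ᵥ z := by
    rw [Matrix.dotProduct_mulVec, ← Matrix.mulVec_transpose, Matrix.mulVec_mulVec,
      Matrix.transpose_transpose]
  have hcs := cs (Aᵀ *ᵥ z) w
  rw [← h1, h2] at hcs
  have h3 := hAhi z
  rcases eq_or_lt_of_le (dot_self_nonneg z) with h0 | h0
  · rw [← h0]; exact mul_nonneg hb2 (dot_self_nonneg w)
  · nlinarith [dot_self_nonneg w, dot_self_nonneg z]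

private lemma low_bound {d : ℕ} (b1 b2 : ℝ) (hb1 : 0 < b1) (M : Matrix (Fin d) (Fin d) ℝ)
    (hAlo : ∀ v : Fin d → ℝ, b1 * (v ⬝ᵥ v) ≤ (M *ᵥ v) ⬝ᵥ v)
    (hAhi : ∀ v : Fin d → ℝ, (M *ᵥ v) ⬝ᵥ v ≤ b2 * (v ⬝ᵥ v)) :
    ∀ v : Fin d → ℝ, b1 * ((M *ᵥ v) ⬝ᵥ v) ≤ (M *ᵥ v) ⬝ᵥ (M *ᵥ v) := by
  intro v
  have hcs := cs (M *ᵥ v) v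
  have hlo := hAlo v
  have hhi := hAhi v
  rcases eq_or_lt_of_le (dot_self_nonneg v) with h0 | h0
  · have hsq : ((M *ᵥ v) ⬝ᵥ v) ^ 2 ≤ 0 := by
      rw [← h0] at hcs; simpa using hcs
    have ht : (M *ᵥ v) ⬝ᵥ v = 0 :=
      sq_eq_zero_iff.mp (le_antisymm hsq (sq_nonneg _))
    rw [ht]
    simpa using dot_self_nonneg (M *ᵥ v)
  · have hts : 0 ≤ (M *ᵥ v) ⬝ᵥ v := le_trans (by nlinarith) hlo
    nlinarith [hcs, h0, mul_nonneg hts (sub_nonneg.mpr hlo)]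

/-- **Single-sample version of Theorem 1 of the paper.** If the Gram matrix `A * Aᵀ` has
quadratic form bounded between `b1` and `b2`, and `B = Aᵀ (A Aᵀ)⁻¹` is the Moore–Penrose right
inverse of `A`, then `‖A y − g‖²` is sandwiched between `b1` and `b2` times
`‖y − B g‖² − ‖y − B (A y)‖²`. -/
theorem stmt_1 {d N : ℕ}
    (b1 b2 : ℝ) (hb1 : 0 < b1) (hb12 : b1 ≤ b2)
    (A : Matrix (Fin d) (Fin N) ℝ)
    (hA : ∀ v : Fin d → ℝ,
      b1 * (∑ i, v i ^ 2) ≤ ((A * Aᵀ) *ᵥ v) ⬝ᵥ v ∧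
      ((A * Aᵀ) *ᵥ v) ⬝ᵥ v ≤ b2 * (∑ i, v i ^ 2))
    (B : Matrix (Fin N) (Fin d) ℝ) (hB : B = Aᵀ * (A * Aᵀ)⁻¹) :
    ∀ (y : Fin N → ℝ) (g : Fin d → ℝ),
      b1 * ((∑ j, (y j - (B *ᵥ g) j) ^ 2) - ∑ j, (y j - (B *ᵥ (A *ᵥ y)) j) ^ 2)
        ≤ ∑ i, ((A *ᵥ y) i - g i) ^ 2 ∧
      ∑ i, ((A *ᵥ y) i - g i) ^ 2
        ≤ b2 * ((∑ j, (y j - (B *ᵥ g) j) ^ 2) - ∑ j, (y j - (B *ᵥ (A *ᵥ y)) j) ^ 2) := by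
  intro y g
  have hb2 : 0 < b2 := lt_of_lt_of_le hb1 hb12
  have hAlo : ∀ v : Fin d → ℝ, b1 * (v ⬝ᵥ v) ≤ ((A * Aᵀ) *ᵥ v) ⬝ᵥ v := by
    intro v; rw [dot_sq_eq]; exact (hA v).1
  have hAhi : ∀ v : Fin d → ℝ, ((A * Aᵀ) *ᵥ v) ⬝ᵥ v ≤ b2 * (v ⬝ᵥ v) := by
    intro v; rw [dot_sq_eq]; exact (hA v).2
  set M : Matrix (Fin d) (Fin d) ℝ := A * Aᵀ with hM
  -- M is invertible
  have hdet : IsUnit M.det := by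
    by_contra h
    have h0 : M.det = 0 := by simpa [isUnit_iff_ne_zero] using h
    obtain ⟨v, hv0, hv⟩ := (Matrix.exists_mulVec_eq_zero_iff).2 h0
    have hlo := hAlo v
    rw [hv, zero_dotProduct] at hlo
    have hvv0 : v ⬝ᵥ v = 0 := by nlinarith [dot_self_nonneg v]
    apply hv0
    funext i
    have hsum : ∑ j, v j ^ 2 = 0 := by rw [← dot_sq_eq, hvv0]
    have := (Finset.sum_eq_zero_iff_of_nonneg (fun j _ => sq_nonneg (v j))).1 hsum i
      (Finset.mem_univ i)
    exact sq_eq_zero_iff.mp this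
  have hMM : M⁻¹ * M = 1 := Matrix.nonsing_inv_mul _ hdet
  have hMM' : M * M⁻¹ = 1 := Matrix.mul_nonsing_inv _ hdet
  have hMsymm : Mᵀ = M := by rw [hM, Matrix.transpose_mul, Matrix.transpose_transpose]
  have hMinvsymm : (M⁻¹)ᵀ = M⁻¹ := by rw [Matrix.transpose_nonsing_inv, hMsymm]
  have hAB : A * B = 1 := by rw [hB, ← Matrix.mul_assoc, ← hM, hMM']
  have hABv : ∀ x, A *ᵥ (B *ᵥ x) = x := by
    intro x; rw [Matrix.mulVec_mulVec, hAB, Matrix.one_mulVec]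
  have hBT : Bᵀ = M⁻¹ * A := by
    rw [hB, Matrix.transpose_mul, hMinvsymm, Matrix.transpose_transpose]
  have hBTB : Bᵀ * B = M⁻¹ := by
    rw [hBT, hB, Matrix.mul_assoc, ← Matrix.mul_assoc A, ← hM, hMM', Matrix.mul_one]
  -- the key quadratic-form inequalities for M⁻¹
  have hfinal : ∀ u : Fin d → ℝ,
      b1 * ((M⁻¹ *ᵥ u) ⬝ᵥ u) ≤ u ⬝ᵥ u ∧ u ⬝ᵥ u ≤ b2 * ((M⁻¹ *ᵥ u) ⬝ᵥ u) := by
    intro u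
    obtain ⟨v, hv⟩ : ∃ v, v = M⁻¹ *ᵥ u := ⟨_, rfl⟩
    have huMv : u = M *ᵥ v := by rw [hv, Matrix.mulVec_mulVec, hMM', Matrix.one_mulVec]
    rw [← hv, huMv]
    have hcomm : v ⬝ᵥ (M *ᵥ v) = (M *ᵥ v) ⬝ᵥ v := dotProduct_comm _ _
    constructor
    · rw [hcomm]
      exact low_bound b1 b2 hb1 M hAlo hAhi v
    · have h2 : v ⬝ᵥ (M *ᵥ v) = (Aᵀ *ᵥ v) ⬝ᵥ (Aᵀ *ᵥ v) := by
        rw [hM, ← Matrix.mulVec_mulVec, Matrix.dotProduct_mulVec, ← Matrix.mulVec_transpose]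
      have hMvA : M *ᵥ v = A *ᵥ (Aᵀ *ᵥ v) := by rw [Matrix.mulVec_mulVec, ← hM]
      calc (M *ᵥ v) ⬝ᵥ (M *ᵥ v) = (A *ᵥ (Aᵀ *ᵥ v)) ⬝ᵥ (A *ᵥ (Aᵀ *ᵥ v)) := by rw [hMvA]
        _ ≤ b2 * ((Aᵀ *ᵥ v) ⬝ᵥ (Aᵀ *ᵥ v)) := op_bound b2 hb2.le A hAhi _
        _ = b2 * (v ⬝ᵥ (M *ᵥ v)) := by rw [← h2]
  set u : Fin d → ℝ := A *ᵥ y - g with hu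
  set a : Fin N → ℝ := y - B *ᵥ (A *ᵥ y) with ha
  set c : Fin N → ℝ := B *ᵥ u with hc
  have hBTa : Bᵀ *ᵥ a = 0 := by
    rw [hBT, ← Matrix.mulVec_mulVec, ha, Matrix.mulVec_sub, hABv]
    simp
  have hac : a ⬝ᵥ c = 0 := by
    rw [hc, Matrix.dotProduct_mulVec, ← Matrix.mulVec_transpose, hBTa, zero_dotProduct]
  have hcc : c ⬝ᵥ c = (M⁻¹ *ᵥ u) ⬝ᵥ u := by
    rw [hc, Matrix.dotProduct_mulVec, ← Matrix.mulVec_transpose, Matrix.mulVec_mulVec, hBTB]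
  have hdecomp : y - B *ᵥ g = a + c := by
    have h1 : B *ᵥ u = B *ᵥ (A *ᵥ y) - B *ᵥ g := by rw [hu, Matrix.mulVec_sub]
    rw [ha, hc, h1]; abel
  have hkey : ((∑ j, (y j - (B *ᵥ g) j) ^ 2) - ∑ j, (y j - (B *ᵥ (A *ᵥ y)) j) ^ 2)
      = (M⁻¹ *ᵥ u) ⬝ᵥ u := by
    have h1 : ∀ j, y j - (B *ᵥ g) j = a j + c j := fun j => congrFun hdecomp j
    have h2 : ∀ j, y j - (B *ᵥ (A *ᵥ y)) j = a j := fun j => rfl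
    calc ((∑ j, (y j - (B *ᵥ g) j) ^ 2) - ∑ j, (y j - (B *ᵥ (A *ᵥ y)) j) ^ 2)
        = (∑ j, ((a j)^2 + 2 * (a j * c j) + (c j * c j))) - ∑ j, (a j)^2 := by
          simp_rw [h1, h2]; congr 1; apply Finset.sum_congr rfl; intros; ring
      _ = 2 * (a ⬝ᵥ c) + c ⬝ᵥ c := by
          rw [Finset.sum_add_distrib, Finset.sum_add_distrib, ← Finset.mul_sum]
          simp only [dotProduct]
          ring
      _ = (M⁻¹ *ᵥ u) ⬝ᵥ u := by rw [hac, hcc]; ring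
  rw [hkey]
  have huu : (∑ i, ((A *ᵥ y) i - g i) ^ 2) = u ⬝ᵥ u := by rw [dot_sq_eq]; rfl
  rw [huu]
  exact hfinal u
end

section
/- Let b > 0 and let A ∈ ℝ^{d×N} be a real matrix such that ⟪A Aᵀ v, v⟫ = b‖v‖² for every v ∈ ℝ^d (in particular A Aᵀ is invertible), and let B := Aᵀ (A Aᵀ)⁻¹. Then for all y ∈ ℝ^N and g ∈ ℝ^d: ‖A y − g‖² = b (‖y − B g‖² − ‖y − B (A y)‖²). Consequently, for fixed y the maps g ↦ ‖A y − g‖² and g ↦ ‖y − B g‖² differ by a positive scalar multiple and an additive constant, so they have the same minimizers. -/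
/-!
The matrix `A Aᵀ` is symmetric with quadratic form `v ↦ b‖v‖²`, so by polarization
`A Aᵀ = b • 1`. For `B = Aᵀ (A Aᵀ)⁻¹` the decomposition `y − B g = (y − B A y) + B (A y − g)`
is orthogonal, because `A` kills the first summand while the second lies in the range of `Aᵀ`;
moreover `‖B w‖² = ⟪w, (A Aᵀ)⁻¹ w⟫ = b⁻¹‖w‖²`. Pythagoras gives the identity, which exhibits
`g ↦ ‖A y − g‖²` as a positive multiple of `g ↦ ‖y − B g‖²` up to a constant.
-/

open Matrix BigOperators

namespace Matrix

variable {m n R : Type*} [Fintype m] [Fintype n]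

theorem transpose_mulVec_dotProduct [CommSemiring R] (A : Matrix m n R) (x : m → R)
    (y : n → R) : (Aᵀ *ᵥ x) ⬝ᵥ y = x ⬝ᵥ (A *ᵥ y) := by
  rw [mulVec_transpose, dotProduct_mulVec]

theorem mulVec_dotProduct_comm_of_transpose_eq [CommSemiring R] {M : Matrix n n R}
    (hM : Mᵀ = M) (u v : n → R) : (M *ᵥ u) ⬝ᵥ v = (M *ᵥ v) ⬝ᵥ u := by
  conv_lhs => rw [← hM]
  rw [transpose_mulVec_dotProduct, dotProduct_comm]

theorem eq_smul_one_of_mulVec_dotProduct_self [DecidableEq n] [CommRing R] [LinearOrder R]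
    [IsStrictOrderedRing R] {M : Matrix n n R} {b : R} (hM : Mᵀ = M)
    (h : ∀ v, (M *ᵥ v) ⬝ᵥ v = b * (v ⬝ᵥ v)) : M = b • 1 := by
  set N := M - b • 1
  have hN_symm : Nᵀ = N := by simp [N, hM]
  have hN : ∀ v, (N *ᵥ v) ⬝ᵥ v = 0 := fun v => by
    simp [N, sub_mulVec, sub_dotProduct, h, smul_mulVec]
  have hN_polar : ∀ u v, (N *ᵥ u) ⬝ᵥ v = 0 := fun u v => by
    have h_sum := hN (u + v)
    rw [mulVec_add, add_dotProduct, dotProduct_add, dotProduct_add, hN u, hN v,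
      mulVec_dotProduct_comm_of_transpose_eq hN_symm v u] at h_sum
    have h_two : (2 : R) * ((N *ᵥ u) ⬝ᵥ v) = 0 := by linear_combination h_sum
    exact (mul_eq_zero.mp h_two).resolve_left two_ne_zero
  have hN_zero : N = 0 := mulVec_injective <| funext fun u => by
    simpa using dotProduct_self_eq_zero.mp (hN_polar u (N *ᵥ u))
  exact sub_eq_zero.mp hN_zero

theorem dotProduct_self_sub_mulVec_eq_add [DecidableEq m] [CommRing R] {A : Matrix m n R}
    (hA : IsUnit (A * Aᵀ).det) {B : Matrix n m R} (hB : B = Aᵀ * (A * Aᵀ)⁻¹)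
    (y : n → R) (g : m → R) :
    (y - B *ᵥ g) ⬝ᵥ (y - B *ᵥ g)
      = (y - B *ᵥ (A *ᵥ y)) ⬝ᵥ (y - B *ᵥ (A *ᵥ y))
        + (A *ᵥ y - g) ⬝ᵥ ((A * Aᵀ)⁻¹ *ᵥ (A *ᵥ y - g)) := by
  set r := y - B *ᵥ (A *ᵥ y)
  set w := A *ᵥ y - g
  have hAB : A * B = 1 := by rw [hB, ← Matrix.mul_assoc, mul_nonsing_inv _ hA]
  have hr : A *ᵥ r = 0 := by rw [mulVec_sub, mulVec_mulVec, hAB, one_mulVec, sub_self]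
  have h_split : y - B *ᵥ g = r + B *ᵥ w := by
    simp only [r, w, mulVec_sub]; abel
  have h_orth : r ⬝ᵥ (B *ᵥ w) = 0 := by
    rw [hB, ← mulVec_mulVec, dotProduct_comm, transpose_mulVec_dotProduct, hr, dotProduct_zero]
  have h_Bw : (B *ᵥ w) ⬝ᵥ (B *ᵥ w) = w ⬝ᵥ ((A * Aᵀ)⁻¹ *ᵥ w) := by
    rw [hB, ← mulVec_mulVec, transpose_mulVec_dotProduct, mulVec_mulVec, mulVec_mulVec,
      mul_nonsing_inv _ hA, one_mulVec, dotProduct_comm]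
  rw [h_split, add_dotProduct, dotProduct_add, dotProduct_add, dotProduct_comm (B *ᵥ w) r,
    h_orth, h_Bw, add_zero, zero_add]

theorem sum_sq_eq_dotProduct_self [CommSemiring R] (v : n → R) : ∑ i, v i ^ 2 = v ⬝ᵥ v := by
  simp [dotProduct, sq]

theorem sum_sub_sq_eq_dotProduct_self [CommRing R] (u v : n → R) :
    ∑ i, (u i - v i) ^ 2 = (u - v) ⬝ᵥ (u - v) :=
  sum_sq_eq_dotProduct_self (u - v)

end Matrix

/-- **Equality case `b1 = b2 = b` of Theorem 1 of the paper.** If `⟪A Aᵀ v, v⟫ = b‖v‖²` for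
every `v`, then `‖A y − g‖² = b (‖y − B g‖² − ‖y − B (A y)‖²)`; consequently, for fixed `y`
the maps `g ↦ ‖A y − g‖²` and `g ↦ ‖y − B g‖²` have the same minimizers. -/
theorem stmt_6 {d N : ℕ}
    (b : ℝ) (hb : 0 < b)
    (A : Matrix (Fin d) (Fin N) ℝ)
    (hA : ∀ v : Fin d → ℝ, ((A * Aᵀ) *ᵥ v) ⬝ᵥ v = b * (∑ i, v i ^ 2))
    (B : Matrix (Fin N) (Fin d) ℝ) (hB : B = Aᵀ * (A * Aᵀ)⁻¹) :
    (∀ (y : Fin N → ℝ) (g : Fin d → ℝ),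
      ∑ i, ((A *ᵥ y) i - g i) ^ 2
        = b * ((∑ j, (y j - (B *ᵥ g) j) ^ 2) - ∑ j, (y j - (B *ᵥ (A *ᵥ y)) j) ^ 2)) ∧
    (∀ (y : Fin N → ℝ) (g : Fin d → ℝ),
      (∀ g' : Fin d → ℝ, ∑ i, ((A *ᵥ y) i - g i) ^ 2 ≤ ∑ i, ((A *ᵥ y) i - g' i) ^ 2) ↔
      (∀ g' : Fin d → ℝ, ∑ j, (y j - (B *ᵥ g) j) ^ 2 ≤ ∑ j, (y j - (B *ᵥ g') j) ^ 2)) := by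
  have hM : A * Aᵀ = b • 1 := eq_smul_one_of_mulVec_dotProduct_self (by simp)
    fun v => by rw [hA, sum_sq_eq_dotProduct_self]
  have hM_mul : A * Aᵀ * (b⁻¹ • 1) = 1 := by
    rw [hM, smul_mul_smul_comm, mul_inv_cancel₀ hb.ne', one_mul, one_smul]
  have hM_inv : (A * Aᵀ)⁻¹ = b⁻¹ • 1 := inv_eq_right_inv hM_mul
  have h_dot : ∀ y g, (A *ᵥ y - g) ⬝ᵥ (A *ᵥ y - g) = b * ((y - B *ᵥ g) ⬝ᵥ (y - B *ᵥ g)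
      - (y - B *ᵥ (A *ᵥ y)) ⬝ᵥ (y - B *ᵥ (A *ᵥ y))) := fun y g => by
    rw [dotProduct_self_sub_mulVec_eq_add (isUnit_det_of_right_inverse hM_mul) hB, hM_inv,
      smul_mulVec, one_mulVec, dotProduct_smul, smul_eq_mul, add_sub_cancel_left,
      mul_inv_cancel_left₀ hb.ne']
  have h_sum : ∀ y g, ∑ i, ((A *ᵥ y) i - g i) ^ 2
      = b * ((∑ j, (y j - (B *ᵥ g) j) ^ 2) - ∑ j, (y j - (B *ᵥ (A *ᵥ y)) j) ^ 2) := by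
    simpa only [sum_sub_sq_eq_dotProduct_self] using h_dot
  refine ⟨h_sum, fun y g => forall_congr' fun g' => ?_⟩
  rw [h_sum y g, h_sum y g', mul_le_mul_iff_right₀ hb, sub_le_sub_iff_right]
end

section
/- Let (Ω, 𝔽, P) be a probability space, let 𝒲 be a measurable space with probability measure ν, and let W_1,…,W_n : Ω → 𝒲 be i.i.d. with law ν. Let H be a countable family of measurable functions h : 𝒲 → ℝ with sup_{w} |h(w)| ≤ b for every h ∈ H, where b > 0. Define the Rademacher complexity R_n(H) := E[ sup_{h∈H} (1/n) Σ_{i=1}^n σ_i h(W_i) ], where σ_1,…,σ_n are i.i.d. uniform on {−1, 1} and independent of (W_1,…,W_n). Then for every δ ≥ 0, with probability at least 1 − 2 exp(−n δ² / (8 b²)) one has sup_{h∈H} | (1/n) Σ_{i=1}^n h(W_i) − E_ν[h] | ≤ 2 R_n(H) + δ. -/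
/-!
Symmetrization: replacing `∫ h dν` by the empirical mean of an independent ghost sample and
exchanging the two samples coordinatewise (which does not change their joint law) bounds the
expected supremum of the deviations `(1/n) ∑ h(Wᵢ) - ∫ h dν` by twice the Rademacher complexity.
Concentration: changing one sample point moves this supremum by at most `2b/n`, so by
McDiarmid's inequality it is sub-Gaussian around its mean with variance proxy `n (2b/n)² = 4b²/n`,
which gives the tail `exp (-n δ² / (8 b²))`. The same holds for the family `-h`, whose Rademacher
complexity is that of `h`, and a union bound over the two tails controls the absolute deviations.
-/

open MeasureTheory ProbabilityTheory
open scoped NNReal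

section BoundedSup

variable {ι : Type*} {f g : ι → ℝ} {B c : ℝ}

lemma bddAbove_range_of_abs_le (h : ∀ i, |f i| ≤ B) : BddAbove (Set.range f) :=
  ⟨B, Set.forall_mem_range.2 fun i => (abs_le.1 (h i)).2⟩

variable [Nonempty ι]

lemma abs_ciSup_le (h : ∀ i, |f i| ≤ B) : |⨆ i, f i| ≤ B := by
  refine abs_le.2 ⟨?_, ciSup_le fun i => (abs_le.1 (h i)).2⟩
  obtain ⟨i⟩ := ‹Nonempty ι›
  exact (abs_le.1 (h i)).1.trans (le_ciSup (bddAbove_range_of_abs_le h) i)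

lemma abs_ciSup_sub_ciSup_le (hf : BddAbove (Set.range f)) (hg : BddAbove (Set.range g))
    (h : ∀ i, |f i - g i| ≤ c) : |(⨆ i, f i) - ⨆ i, g i| ≤ c := by
  have key : ∀ {f g : ι → ℝ}, BddAbove (Set.range g) → (∀ i, f i - g i ≤ c) →
      (⨆ i, f i) ≤ (⨆ i, g i) + c := fun hg h =>
    ciSup_le fun i => by linarith [h i, le_ciSup hg i]
  refine abs_sub_le_iff.2 ⟨?_, ?_⟩
  · linarith [key hg fun i => (abs_le.1 (h i)).2]
  · linarith [key (f := g) hf fun i => by linarith [(abs_le.1 (h i)).1]]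

end BoundedSup

section BoundedFunctions

variable {α ι : Type*} [MeasurableSpace α] {μ : Measure α}

lemma abs_integral_le_of_abs_le [IsProbabilityMeasure μ] {f : α → ℝ} {B : ℝ}
    (h : ∀ x, |f x| ≤ B) : |∫ x, f x ∂μ| ≤ B := by
  simpa using norm_integral_le_of_norm_le_const (μ := μ) (f := f) (ae_of_all _ h)

lemma abs_integral_sub_integral_le [IsProbabilityMeasure μ] {f f' : α → ℝ} (hf : Integrable f μ)
    (hf' : Integrable f' μ) {c : ℝ} (h : ∀ x, |f x - f' x| ≤ c) :
    |∫ x, f x ∂μ - ∫ x, f' x ∂μ| ≤ c := by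
  rw [← integral_sub hf hf']
  exact abs_integral_le_of_abs_le h

lemma integrable_ciSup_of_abs_le [Countable ι] [Nonempty ι] [IsFiniteMeasure μ]
    {F : ι → α → ℝ} (hF : ∀ m, Measurable (F m)) {B : ℝ} (hFB : ∀ m x, |F m x| ≤ B) :
    Integrable (fun x => ⨆ m, F m x) μ :=
  .of_bound (Measurable.iSup hF).aestronglyMeasurable B
    (ae_of_all _ fun x => abs_ciSup_le fun m => hFB m x)

end BoundedFunctions

namespace ProbabilityTheory

section McDiarmid

variable {α β : Type*} [MeasurableSpace α] [MeasurableSpace β]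

lemma hasSubgaussianMGF_sub_integral_of_abs_sub_le {μ : Measure α} [IsProbabilityMeasure μ]
    {X : α → ℝ} (hX : AEMeasurable X μ) {c : ℝ≥0} (hc : ∀ a a', |X a - X a'| ≤ c) :
    HasSubgaussianMGF (fun a => X a - ∫ a, X a ∂μ) (c ^ 2) μ := by
  obtain ⟨a₀⟩ := nonempty_of_isProbabilityMeasure μ
  convert hasSubgaussianMGF_of_mem_Icc (a := X a₀ - c) (b := X a₀ + c) hX
    (ae_of_all _ fun a => by constructor <;> linarith [abs_sub_le_iff.1 (hc a a₀)]) using 2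
  rw [add_sub_sub_cancel, ← two_mul]
  ext; simp

/-- One step of McDiarmid's inequality: Hoeffding's lemma in the first coordinate, with the
second one frozen, followed by the hypothesis on the partial average. -/
lemma HasSubgaussianMGF.prod_of_abs_sub_le
    (μ : Measure α) (ν : Measure β) [IsProbabilityMeasure μ] [IsProbabilityMeasure ν]
    {f : α × β → ℝ} (hf : Measurable f) {B : ℝ} (hfB : ∀ p, |f p| ≤ B) {c d : ℝ≥0}
    (hc : ∀ a a' b, |f (a, b) - f (a', b)| ≤ c)
    (hd : HasSubgaussianMGF (fun b => ∫ a, f (a, b) ∂μ - ∫ p, f p ∂μ.prod ν) d ν) :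
    HasSubgaussianMGF (fun p => f p - ∫ p, f p ∂μ.prod ν) (c ^ 2 + d) (μ.prod ν) := by
  set m := ∫ p, f p ∂μ.prod ν
  set fbar : β → ℝ := fun b => ∫ a, f (a, b) ∂μ
  have hsection : ∀ b, HasSubgaussianMGF (fun a => f (a, b) - fbar b) (c ^ 2) μ := fun b =>
    hasSubgaussianMGF_sub_integral_of_abs_sub_le (hf.comp measurable_prodMk_right).aemeasurable
      (hc · · b)
  have hexp_int : ∀ t, Integrable (fun p => Real.exp (t * (f p - m))) (μ.prod ν) := fun _ =>
    integrable_exp_mul_of_mem_Icc (a := -(B + |m|)) (b := B + |m|) (by fun_prop)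
      (ae_of_all _ fun p => abs_le.1 ((abs_sub _ _).trans (by linarith [hfB p])))
  refine ⟨hexp_int, fun t => ?_⟩
  calc mgf (fun p => f p - m) (μ.prod ν) t
      = ∫ b, Real.exp (t * (fbar b - m)) * ∫ a, Real.exp (t * (f (a, b) - fbar b)) ∂μ ∂ν := by
        rw [mgf, integral_prod_symm _ (hexp_int t)]
        refine integral_congr_ae (ae_of_all _ fun b => ?_)
        dsimp only
        rw [← integral_const_mul]
        refine integral_congr_ae (ae_of_all _ fun a => ?_)
        dsimp only
        rw [← Real.exp_add]
        ring_nf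
    _ ≤ ∫ b, Real.exp (t * (fbar b - m)) * Real.exp (c ^ 2 * t ^ 2 / 2) ∂ν := by
        refine integral_mono_of_nonneg (ae_of_all _ fun b => by positivity)
          ((hd.integrable_exp_mul t).mul_const _) (ae_of_all _ fun b => ?_)
        dsimp only
        gcongr
        exact_mod_cast (hsection b).mgf_le t
    _ = mgf (fun b => fbar b - m) ν t * Real.exp (c ^ 2 * t ^ 2 / 2) := integral_mul_const _ _
    _ ≤ Real.exp (d * t ^ 2 / 2) * Real.exp (c ^ 2 * t ^ 2 / 2) := by gcongr; exact hd.mgf_le t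
    _ = Real.exp (↑(c ^ 2 + d) * t ^ 2 / 2) := by
        rw [← Real.exp_add]; push_cast; ring_nf

lemma HasSubgaussianMGF.comp_measurePreserving {μ : Measure α} {ν : Measure β} {e : α ≃ᵐ β}
    (he : MeasurePreserving e μ ν) {f : β → ℝ} {c : ℝ≥0}
    (h : HasSubgaussianMGF (fun y => f y - ∫ y, f y ∂ν) c ν) :
    HasSubgaussianMGF (fun x => f (e x) - ∫ x, f (e x) ∂μ) c μ := by
  rw [he.integral_comp' f]
  exact .of_map (Y := e) he.measurable.aemeasurable (by rwa [he.map_eq])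

/-- McDiarmid's bounded-differences inequality, in sub-Gaussian form. -/
theorem hasSubgaussianMGF_pi_of_abs_update_sub_le (ν : Measure α) [IsProbabilityMeasure ν]
    {c : ℝ≥0} {B : ℝ} :
    ∀ {n : ℕ} {G : (Fin n → α) → ℝ}, Measurable G → (∀ x, |G x| ≤ B) →
      (∀ x i a, |G (Function.update x i a) - G x| ≤ c) →
      HasSubgaussianMGF (fun x => G x - ∫ y, G y ∂Measure.pi fun _ => ν) (n * c ^ 2)
        (Measure.pi fun _ => ν)
  | 0, G, _, _, _ => by
    have hconst : (fun x => G x - ∫ y, G y ∂Measure.pi fun _ => ν) = fun _ => 0 := by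
      ext x
      simp [integral_unique, Subsingleton.elim x default]
    rw [hconst, Nat.cast_zero, zero_mul]
    exact HasSubgaussianMGF.fun_zero
  | n + 1, G, hG, hGB, hGc => by
    set μn := Measure.pi fun _ : Fin n => ν
    let e := MeasurableEquiv.piFinSuccAbove (fun _ : Fin (n + 1) => α) 0
    have he : MeasurePreserving e (Measure.pi fun _ => ν) (ν.prod μn) :=
      measurePreserving_piFinSuccAbove (fun _ => ν) 0
    set f : α × (Fin n → α) → ℝ := fun p => G (e.symm p)
    have hf_cons : ∀ a y, f (a, y) = G (Fin.cons a y) := fun a y => by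
      simp only [f]; exact congrArg G (Fin.insertNth_zero' a y)
    have hf : Measurable f := hG.comp e.symm.measurable
    have hsection : ∀ y, Integrable (fun a => f (a, y)) ν := fun y =>
      .of_bound (hf.comp measurable_prodMk_right).aestronglyMeasurable B
        (ae_of_all _ fun a => hGB _)
    have hfbar : HasSubgaussianMGF (fun y => ∫ a, f (a, y) ∂ν - ∫ p, f p ∂ν.prod μn)
        (n * c ^ 2) μn := by
      rw [integral_prod_symm f (.of_bound hf.aestronglyMeasurable B (ae_of_all _ fun p => hGB _))]
      exact hasSubgaussianMGF_pi_of_abs_update_sub_le ν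
        (hf.stronglyMeasurable.integral_prod_left' (μ := ν)).measurable
        (fun y => abs_integral_le_of_abs_le fun a => hGB _) fun y i a =>
          abs_integral_sub_integral_le (hsection _) (hsection _) fun a' => by
            simpa [hf_cons, Fin.cons_update] using hGc (Fin.cons a' y) i.succ a
    have hprod := HasSubgaussianMGF.prod_of_abs_sub_le ν μn hf (fun p => hGB _)
      (fun a a' y => by simpa [hf_cons, Fin.update_cons_zero] using hGc (Fin.cons a' y) 0 a) hfbar
    convert hprod.comp_measurePreserving he using 1
    · simp [f]
    · push_cast; ring

end McDiarmid

end ProbabilityTheory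

section Symmetrization

variable {α ι : Type*} [MeasurableSpace α]

lemma integral_ciSup_sub_integral_le_integral_prod [Countable ι] [Nonempty ι]
    (μ : Measure α) [IsProbabilityMeasure μ] {A : ι → α → ℝ} (hA : ∀ m, Measurable (A m))
    {B : ℝ} (hAB : ∀ m x, |A m x| ≤ B) :
    ∫ x, ⨆ m, (A m x - ∫ y, A m y ∂μ) ∂μ ≤ ∫ p, ⨆ m, (A m p.1 - A m p.2) ∂μ.prod μ := by
  have hdiff : ∀ m x y, |A m x - A m y| ≤ 2 * B := fun m x y =>
    (abs_sub _ _).trans (by linarith [hAB m x, hAB m y])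
  have hD : Integrable (fun p : α × α => ⨆ m, (A m p.1 - A m p.2)) (μ.prod μ) :=
    integrable_ciSup_of_abs_le (fun m => by fun_prop) fun m p => hdiff m p.1 p.2
  rw [integral_prod _ hD]
  refine integral_mono (integrable_ciSup_of_abs_le (B := 2 * B) (fun m => by fun_prop)
    fun m x => ?_) hD.integral_prod_left fun x => ciSup_le fun m => ?_
  · exact (abs_sub _ _).trans (by linarith [hAB m x, abs_integral_le_of_abs_le (μ := μ) (hAB m)])
  have hAm : Integrable (A m) μ := .of_bound (hA m).aestronglyMeasurable B (ae_of_all _ (hAB m))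
  calc A m x - ∫ y, A m y ∂μ = ∫ y, (A m x - A m y) ∂μ := by
        rw [integral_sub (integrable_const _) hAm, integral_const, probReal_univ, one_smul]
    _ ≤ ∫ y, ⨆ m, (A m x - A m y) ∂μ :=
        integral_mono ((integrable_const _).sub hAm)
          (integrable_ciSup_of_abs_le (fun m => by fun_prop) (hdiff · x)) fun y =>
          le_ciSup (bddAbove_range_of_abs_le fun m => hdiff m x y) m

variable {κ : Type*}

def swapWhere (s : κ → Bool) (p : (κ → α) × (κ → α)) : (κ → α) × (κ → α) :=
  (fun i => if s i then p.1 i else p.2 i, fun i => if s i then p.2 i else p.1 i)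

lemma measurePreserving_swapWhere [Fintype κ] (ν : Measure α) [SigmaFinite ν] (s : κ → Bool) :
    MeasurePreserving (swapWhere s) ((Measure.pi fun _ : κ => ν).prod (Measure.pi fun _ => ν))
      ((Measure.pi fun _ : κ => ν).prod (Measure.pi fun _ => ν)) := by
  have he := measurePreserving_arrowProdEquivProdArrow α α κ (fun _ => ν) (fun _ => ν)
  have hswap : MeasurePreserving (fun (z : κ → α × α) i => if s i then z i else (z i).swap)
      (Measure.pi fun _ => ν.prod ν) (Measure.pi fun _ => ν.prod ν) :=
    measurePreserving_pi (f := fun i (q : α × α) => if s i then q else q.swap) _ _ fun i => by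
      cases s i
      · exact Measure.measurePreserving_swap
      · exact MeasurePreserving.id _
  convert (he.comp hswap).comp he.symm using 1
  ext p i <;> by_cases h : s i <;>
    simp [swapWhere, h, MeasurableEquiv.arrowProdEquivProdArrow, Equiv.arrowProdEquivProdArrow]

lemma Fintype.sum_comp_not [Fintype κ] [DecidableEq κ] {M : Type*} [AddCommMonoid M]
    (F : (κ → Bool) → M) : ∑ s : κ → Bool, F (fun i => !s i) = ∑ s, F s :=
  Fintype.sum_equiv (Function.Involutive.toPerm _ fun _ => funext fun _ => Bool.not_not _) _ _
    fun _ => rfl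

end Symmetrization

section EmpiricalProcess

variable {𝒲 ι : Type*} {n : ℕ} {g : ι → 𝒲 → ℝ} {b : ℝ}

lemma abs_one_div_mul_sum_le (hn : 0 < n) {t : Fin n → ℝ} {B : ℝ} (h : ∀ i, |t i| ≤ B) :
    |1 / (n : ℝ) * ∑ i, t i| ≤ B := by
  have hn' : (0 : ℝ) < n := Nat.cast_pos.2 hn
  rw [abs_mul, abs_of_pos (by positivity), one_div_mul_eq_div, div_le_iff₀ hn']
  calc |∑ i, t i| ≤ ∑ i, |t i| := Finset.abs_sum_le_sum_abs _ _
    _ ≤ ∑ _i : Fin n, B := Finset.sum_le_sum fun i _ => h i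
    _ = B * n := by simp [mul_comm]

lemma abs_sign_mul (s : Bool) (t : ℝ) : |(if s then (1 : ℝ) else -1) * t| = |t| := by
  cases s <;> simp

noncomputable def signedEmpiricalSup (g : ι → 𝒲 → ℝ) (s : Fin n → Bool) (x : Fin n → 𝒲) : ℝ :=
  ⨆ m, 1 / (n : ℝ) * ∑ i, (if s i then (1 : ℝ) else -1) * g m (x i)

/-- The average over all `2 ^ n` sign patterns is the expectation over Rademacher signs. -/
noncomputable def empiricalRademacherComplexity (g : ι → 𝒲 → ℝ) (x : Fin n → 𝒲) : ℝ :=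
  (1 : ℝ) / 2 ^ n * ∑ s : Fin n → Bool, signedEmpiricalSup g s x

lemma le_signedEmpiricalSup (hn : 0 < n) (hgb : ∀ m w, |g m w| ≤ b) (s : Fin n → Bool)
    (x : Fin n → 𝒲) (m : ι) :
    1 / (n : ℝ) * ∑ i, (if s i then (1 : ℝ) else -1) * g m (x i) ≤ signedEmpiricalSup g s x :=
  le_ciSup (f := fun m => 1 / (n : ℝ) * ∑ i, (if s i then (1 : ℝ) else -1) * g m (x i))
    (bddAbove_range_of_abs_le fun m =>
      abs_one_div_mul_sum_le hn fun _ => (abs_sign_mul _ _).trans_le (hgb m _)) m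

lemma abs_signedEmpiricalSup_le [Nonempty ι] (hn : 0 < n) (hgb : ∀ m w, |g m w| ≤ b)
    (s : Fin n → Bool) (x : Fin n → 𝒲) : |signedEmpiricalSup g s x| ≤ b :=
  abs_ciSup_le fun m => abs_one_div_mul_sum_le hn fun _ => (abs_sign_mul _ _).trans_le (hgb m _)

lemma empiricalRademacherComplexity_neg :
    empiricalRademacherComplexity (n := n) (fun m w => -g m w) =
      empiricalRademacherComplexity g := by
  ext x
  have hflip : ∀ s : Fin n → Bool,
      signedEmpiricalSup (fun m w => -g m w) s x = signedEmpiricalSup g (fun i => !s i) x := by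
    intro s
    simp only [signedEmpiricalSup]
    congr! 4 with m i
    by_cases hs : s i <;> simp [hs]
  simp only [empiricalRademacherComplexity, hflip, Fintype.sum_comp_not (signedEmpiricalSup g · x)]

variable [MeasurableSpace 𝒲]

noncomputable def empiricalDeviation (ν : Measure 𝒲) (g : ι → 𝒲 → ℝ) (x : Fin n → 𝒲) : ℝ :=
  ⨆ m, (1 / (n : ℝ) * ∑ i, g m (x i) - ∫ w, g m w ∂ν)

noncomputable def uniformDeviation (ν : Measure 𝒲) (g : ι → 𝒲 → ℝ) (x : Fin n → 𝒲) : ℝ :=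
  ⨆ m, |1 / (n : ℝ) * ∑ i, g m (x i) - ∫ w, g m w ∂ν|

lemma integral_one_div_mul_sum_comp_eval {ν : Measure 𝒲} [IsProbabilityMeasure ν] (hn : 0 < n)
    {f : 𝒲 → ℝ} (hf : Integrable f ν) :
    ∫ x, 1 / (n : ℝ) * ∑ i, f (x i) ∂Measure.pi (fun _ : Fin n => ν) = ∫ w, f w ∂ν := by
  rw [integral_const_mul, integral_finsetSum _ fun i _ => integrable_comp_eval hf,
    Finset.sum_congr rfl fun i _ =>
      integral_comp_eval (μ := fun _ : Fin n => ν) (i := i) hf.aestronglyMeasurable,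
    Finset.sum_const, Finset.card_univ, Fintype.card_fin, nsmul_eq_mul]
  field_simp

lemma abs_empiricalMean_sub_integral_le {ν : Measure 𝒲} [IsProbabilityMeasure ν] (hn : 0 < n)
    (hgb : ∀ m w, |g m w| ≤ b) (m : ι) (x : Fin n → 𝒲) :
    |1 / (n : ℝ) * ∑ i, g m (x i) - ∫ w, g m w ∂ν| ≤ 2 * b :=
  (abs_sub _ _).trans (by linarith [abs_one_div_mul_sum_le hn fun i => hgb m (x i),
    abs_integral_le_of_abs_le (μ := ν) (hgb m)])

lemma abs_empiricalDeviation_update_sub_le [Nonempty ι] {ν : Measure 𝒲} [IsProbabilityMeasure ν]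
    (hn : 0 < n) (hgb : ∀ m w, |g m w| ≤ b) (x : Fin n → 𝒲) (i : Fin n) (a : 𝒲) :
    |empiricalDeviation ν g (Function.update x i a) - empiricalDeviation ν g x| ≤ 2 * b / n := by
  refine abs_ciSup_sub_ciSup_le
    (bddAbove_range_of_abs_le (abs_empiricalMean_sub_integral_le hn hgb · _))
    (bddAbove_range_of_abs_le (abs_empiricalMean_sub_integral_le hn hgb · _)) fun m => ?_
  have hsum : ∑ j, g m (Function.update x i a j) - ∑ j, g m (x j) = g m a - g m (x i) := by
    rw [← Finset.sum_sub_distrib, Finset.sum_eq_single i (fun j _ hj => by simp [hj]) (by simp)]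
    simp
  have hn' : (0 : ℝ) < n := Nat.cast_pos.2 hn
  rw [sub_sub_sub_cancel_right, ← mul_sub, hsum, abs_mul, abs_of_pos (by positivity),
    one_div_mul_eq_div]
  gcongr
  exact (abs_sub _ _).trans (by linarith [hgb m a, hgb m (x i)])

lemma le_empiricalDeviation {ν : Measure 𝒲} [IsProbabilityMeasure ν] (hn : 0 < n)
    (hgb : ∀ m w, |g m w| ≤ b) (x : Fin n → 𝒲) (m : ι) :
    1 / (n : ℝ) * ∑ i, g m (x i) - ∫ w, g m w ∂ν ≤ empiricalDeviation ν g x :=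
  le_ciSup (f := fun m => 1 / (n : ℝ) * ∑ i, g m (x i) - ∫ w, g m w ∂ν)
    (bddAbove_range_of_abs_le (abs_empiricalMean_sub_integral_le hn hgb · x)) m

lemma lt_empiricalDeviation_or_lt_empiricalDeviation_neg [Nonempty ι] {ν : Measure 𝒲}
    [IsProbabilityMeasure ν] (hn : 0 < n) (hgb : ∀ m w, |g m w| ≤ b) {a : ℝ} {x : Fin n → 𝒲}
    (hx : a < uniformDeviation ν g x) :
    a < empiricalDeviation ν g x ∨ a < empiricalDeviation ν (fun m w => -g m w) x := by
  obtain ⟨m, hm⟩ := exists_lt_of_lt_ciSup hx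
  have hneg := le_empiricalDeviation (ν := ν) hn
    (fun m w => (abs_neg (g m w)).trans_le (hgb m w)) x m
  rw [integral_neg, Finset.sum_neg_distrib] at hneg
  rcases lt_abs.1 hm with hlt | hlt
  · exact Or.inl (hlt.trans_le (le_empiricalDeviation hn hgb x m))
  · exact Or.inr (by linarith)

variable [Countable ι]

lemma measurable_signedEmpiricalSup (hg : ∀ m, Measurable (g m)) (s : Fin n → Bool) :
    Measurable (signedEmpiricalSup g s) :=
  Measurable.iSup fun m => by fun_prop

lemma measurable_empiricalRademacherComplexity (hg : ∀ m, Measurable (g m)) :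
    Measurable (empiricalRademacherComplexity (n := n) g) :=
  (Finset.measurable_sum _ fun s _ => measurable_signedEmpiricalSup hg s).const_mul _

/-- Exchanging the two samples wherever `s i = false` preserves their joint law and turns the
differences into their `s`-signed versions. -/
lemma integral_ciSup_sub_eq_integral_ciSup_signed (ν : Measure 𝒲) [SigmaFinite ν]
    (hg : ∀ m, Measurable (g m)) (s : Fin n → Bool) :
    ∫ p, ⨆ m, (1 / (n : ℝ) * ∑ i, g m (p.1 i) - 1 / (n : ℝ) * ∑ i, g m (p.2 i))
        ∂(Measure.pi fun _ : Fin n => ν).prod (Measure.pi fun _ : Fin n => ν)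
      = ∫ p, ⨆ m, 1 / (n : ℝ) * ∑ i, (if s i then (1 : ℝ) else -1) * (g m (p.1 i) - g m (p.2 i))
        ∂(Measure.pi fun _ => ν).prod (Measure.pi fun _ => ν) := by
  have hT := measurePreserving_swapWhere ν s
  conv_lhs => rw [← hT.map_eq]
  rw [integral_map hT.measurable.aemeasurable
    (Measurable.iSup fun m => by fun_prop).aestronglyMeasurable]
  refine integral_congr_ae (ae_of_all _ fun p => ?_)
  simp only [← mul_sub, ← Finset.sum_sub_distrib]
  congr! 4 with m i
  by_cases h : s i <;> simp [swapWhere, h]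

lemma measurable_uniformDeviation {ν : Measure 𝒲} (hg : ∀ m, Measurable (g m)) :
    Measurable (uniformDeviation (n := n) ν g) :=
  Measurable.iSup fun m => by fun_prop

variable [Nonempty ι]

lemma integrable_signedEmpiricalSup {μ : Measure (Fin n → 𝒲)} [IsFiniteMeasure μ] (hn : 0 < n)
    (hg : ∀ m, Measurable (g m)) (hgb : ∀ m w, |g m w| ≤ b) (s : Fin n → Bool) :
    Integrable (signedEmpiricalSup g s) μ :=
  .of_bound (measurable_signedEmpiricalSup hg s).aestronglyMeasurable b
    (ae_of_all _ (abs_signedEmpiricalSup_le hn hgb s))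

lemma integral_ciSup_signed_sub_le (ν : Measure 𝒲) [IsProbabilityMeasure ν] (hn : 0 < n)
    (hg : ∀ m, Measurable (g m)) (hgb : ∀ m w, |g m w| ≤ b) (s : Fin n → Bool) :
    ∫ p, ⨆ m, 1 / (n : ℝ) * ∑ i, (if s i then (1 : ℝ) else -1) * (g m (p.1 i) - g m (p.2 i))
        ∂(Measure.pi fun _ => ν).prod (Measure.pi fun _ => ν)
      ≤ ∫ x, signedEmpiricalSup g s x ∂Measure.pi (fun _ => ν)
        + ∫ x, signedEmpiricalSup g (fun i => !s i) x ∂Measure.pi (fun _ => ν) := by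
  set μ := Measure.pi fun _ : Fin n => ν
  have hint := integrable_signedEmpiricalSup (μ := μ) hn hg hgb
  have hsplit : ∀ m (p : (Fin n → 𝒲) × (Fin n → 𝒲)),
      1 / (n : ℝ) * ∑ i, (if s i then (1 : ℝ) else -1) * (g m (p.1 i) - g m (p.2 i))
        = 1 / (n : ℝ) * ∑ i, (if s i then (1 : ℝ) else -1) * g m (p.1 i)
          + 1 / (n : ℝ) * ∑ i, (if !s i then (1 : ℝ) else -1) * g m (p.2 i) := fun m p => by
    rw [← mul_add, ← Finset.sum_add_distrib]
    congr 1
    refine Finset.sum_congr rfl fun i _ => ?_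
    cases s i <;> simp <;> ring
  calc _ ≤ ∫ p, (signedEmpiricalSup g s p.1 + signedEmpiricalSup g (fun i => !s i) p.2)
          ∂μ.prod μ := by
        refine integral_mono (integrable_ciSup_of_abs_le (B := 2 * b) (fun m => by fun_prop)
          fun m p => ?_) (((hint s).comp_fst μ).add ((hint _).comp_snd μ)) fun p => ?_
        · exact abs_one_div_mul_sum_le hn fun i => (abs_sign_mul _ _).trans_le
            ((abs_sub _ _).trans (by linarith [hgb m (p.1 i), hgb m (p.2 i)]))
        · exact ciSup_le fun m => (hsplit m p).trans_le (add_le_add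
            (le_signedEmpiricalSup hn hgb s p.1 m) (le_signedEmpiricalSup hn hgb _ p.2 m))
    _ = _ := by
        rw [integral_add ((hint s).comp_fst μ) ((hint _).comp_snd μ), integral_fun_fst,
          integral_fun_snd]
        simp

theorem integral_empiricalDeviation_le (ν : Measure 𝒲) [IsProbabilityMeasure ν] (hn : 0 < n)
    (hg : ∀ m, Measurable (g m)) (hgb : ∀ m w, |g m w| ≤ b) :
    ∫ x, empiricalDeviation ν g x ∂Measure.pi (fun _ : Fin n => ν)
      ≤ 2 * ∫ x, empiricalRademacherComplexity g x ∂Measure.pi (fun _ : Fin n => ν) := by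
  set μ := Measure.pi fun _ : Fin n => ν
  have hmean : ∀ m, ∫ x, 1 / (n : ℝ) * ∑ i, g m (x i) ∂μ = ∫ w, g m w ∂ν := fun m =>
    integral_one_div_mul_sum_comp_eval hn
      (.of_bound (hg m).aestronglyMeasurable b (ae_of_all _ (hgb m)))
  calc ∫ x, empiricalDeviation ν g x ∂μ
      = ∫ x, ⨆ m, (1 / (n : ℝ) * ∑ i, g m (x i) - ∫ y, 1 / (n : ℝ) * ∑ i, g m (y i) ∂μ) ∂μ := by
        simp only [empiricalDeviation, hmean]
    _ ≤ ∫ p, ⨆ m, (1 / (n : ℝ) * ∑ i, g m (p.1 i) - 1 / (n : ℝ) * ∑ i, g m (p.2 i)) ∂μ.prod μ :=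
        integral_ciSup_sub_integral_le_integral_prod μ (fun m => by fun_prop)
          fun m x => abs_one_div_mul_sum_le hn fun i => hgb m (x i)
    _ = 1 / 2 ^ n * ∑ s : Fin n → Bool, ∫ p, ⨆ m, 1 / (n : ℝ) *
          ∑ i, (if s i then (1 : ℝ) else -1) * (g m (p.1 i) - g m (p.2 i)) ∂μ.prod μ := by
        rw [← Finset.sum_congr rfl fun s _ => integral_ciSup_sub_eq_integral_ciSup_signed ν hg s,
          Finset.sum_const, Finset.card_univ, nsmul_eq_mul]
        simp [μ]
    _ ≤ 1 / 2 ^ n * ∑ s : Fin n → Bool, (∫ x, signedEmpiricalSup g s x ∂μ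
          + ∫ x, signedEmpiricalSup g (fun i => !s i) x ∂μ) := by
        gcongr with s
        exact integral_ciSup_signed_sub_le ν hn hg hgb s
    _ = 2 * ∫ x, empiricalRademacherComplexity g x ∂μ := by
        rw [Finset.sum_add_distrib,
          Fintype.sum_comp_not fun s => ∫ x, signedEmpiricalSup g s x ∂μ]
        simp only [empiricalRademacherComplexity]
        rw [integral_const_mul,
          integral_finsetSum _ fun s _ => integrable_signedEmpiricalSup hn hg hgb s]
        ring

theorem measureReal_le_empiricalDeviation_sub_integral_le (ν : Measure 𝒲) [IsProbabilityMeasure ν]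
    (hn : 0 < n) (hg : ∀ m, Measurable (g m)) (hgb : ∀ m w, |g m w| ≤ b) {δ : ℝ} (hδ : 0 ≤ δ) :
    (Measure.pi fun _ : Fin n => ν).real
        {x | δ ≤ empiricalDeviation ν g x
          - ∫ y, empiricalDeviation ν g y ∂Measure.pi fun _ : Fin n => ν}
      ≤ Real.exp (-(n * δ ^ 2) / (8 * b ^ 2)) := by
  obtain ⟨w⟩ := nonempty_of_isProbabilityMeasure ν
  have hc : 0 ≤ 2 * b / n := by
    have := (abs_nonneg _).trans (hgb (Classical.arbitrary ι) w)
    positivity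
  let c : ℝ≥0 := ⟨2 * b / n, hc⟩
  have hsub := hasSubgaussianMGF_pi_of_abs_update_sub_le ν (c := c)
    (G := empiricalDeviation ν g) (Measurable.iSup fun m => by fun_prop)
    (fun x => abs_ciSup_le (abs_empiricalMean_sub_integral_le hn hgb · x))
    (abs_empiricalDeviation_update_sub_le hn hgb)
  refine (hsub.measure_ge_le hδ).trans_eq ?_
  have hn' : (n : ℝ) ≠ 0 := Nat.cast_ne_zero.2 hn.ne'
  congr 1
  push_cast
  rw [show (c : ℝ) = 2 * b / n from rfl,
    show 2 * (n * (2 * b / n) ^ 2) = 8 * b ^ 2 / n by field_simp; ring, div_div_eq_mul_div]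
  ring

theorem le_measureReal_uniformDeviation_le (ν : Measure 𝒲) [IsProbabilityMeasure ν] (hn : 0 < n)
    (hg : ∀ m, Measurable (g m)) (hgb : ∀ m w, |g m w| ≤ b) {δ : ℝ} (hδ : 0 ≤ δ) :
    1 - 2 * Real.exp (-(n * δ ^ 2) / (8 * b ^ 2)) ≤ (Measure.pi fun _ : Fin n => ν).real
      {x | uniformDeviation ν g x
        ≤ 2 * ∫ y, empiricalRademacherComplexity g y ∂Measure.pi (fun _ : Fin n => ν) + δ} := by
  set μ := Measure.pi fun _ : Fin n => ν
  set ε := Real.exp (-(n * δ ^ 2) / (8 * b ^ 2))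
  set R := ∫ y, empiricalRademacherComplexity g y ∂μ
  have hg' : ∀ m, Measurable fun w => -g m w := fun m => (hg m).neg
  have hgb' : ∀ m w, |-g m w| ≤ b := fun m w => (abs_neg _).trans_le (hgb m w)
  have hsymm := integral_empiricalDeviation_le ν hn hg hgb
  have hsymm' := integral_empiricalDeviation_le ν hn hg' hgb'
  rw [empiricalRademacherComplexity_neg] at hsymm'
  have hT : MeasurableSet {x : Fin n → 𝒲 | uniformDeviation ν g x ≤ 2 * R + δ} :=
    measurableSet_le (measurable_uniformDeviation hg) measurable_const
  have hcompl : μ.real {x | uniformDeviation ν g x ≤ 2 * R + δ}ᶜ ≤ 2 * ε := calc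
    _ ≤ μ.real ({x | δ ≤ empiricalDeviation ν g x - ∫ y, empiricalDeviation ν g y ∂μ}
          ∪ {x | δ ≤ empiricalDeviation ν (fun m w => -g m w) x
            - ∫ y, empiricalDeviation ν (fun m w => -g m w) y ∂μ}) := by
        refine measureReal_mono fun x hx => ?_
        rcases lt_empiricalDeviation_or_lt_empiricalDeviation_neg hn hgb (not_le.1 hx)
          with hlt | hlt
        · exact Or.inl (by simp only [Set.mem_ofPred_eq]; linarith)
        · exact Or.inr (by simp only [Set.mem_ofPred_eq]; linarith)
    _ ≤ ε + ε := (measureReal_union_le _ _).trans (add_le_add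
        (measureReal_le_empiricalDeviation_sub_integral_le ν hn hg hgb hδ)
        (measureReal_le_empiricalDeviation_sub_integral_le ν hn hg' hgb' hδ))
    _ = 2 * ε := by ring
  rw [probReal_compl_eq_one_sub hT] at hcompl
  linarith

end EmpiricalProcess

theorem stmt_12_general {Ω 𝒲 : Type*} [MeasurableSpace Ω] [MeasurableSpace 𝒲]
    (P : Measure Ω) [IsProbabilityMeasure P]
    (ν : Measure 𝒲) [IsProbabilityMeasure ν]
    {n : ℕ}
    (W : Fin n → Ω → 𝒲)
    (hWmeas : ∀ i, Measurable (W i))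
    (hWindep : iIndepFun W P)
    (hWlaw : ∀ i, Measure.map (W i) P = ν)
    {ι : Type*} [Countable ι]
    (h : ι → 𝒲 → ℝ) (hmeas : ∀ m, Measurable (h m))
    (b : ℝ) (hbound : ∀ m w, |h m w| ≤ b)
    (R : ℝ)
    (hR : R = ∫ ω, ((1 : ℝ) / 2 ^ n) * ∑ s : Fin n → Bool,
      ⨆ m : ι, (1 / (n : ℝ)) * ∑ i, (if s i then (1 : ℝ) else -1) * h m (W i ω) ∂P) :
    ∀ δ : ℝ, 0 ≤ δ →
      ENNReal.ofReal (1 - 2 * Real.exp (-(n * δ ^ 2) / (8 * b ^ 2))) ≤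
        P {ω | ⨆ m : ι,
          |(1 / (n : ℝ)) * ∑ i, h m (W i ω) - ∫ w, h m w ∂ν| ≤ 2 * R + δ} := by
  intro δ hδ
  rcases le_or_gt (1 - 2 * Real.exp (-(n * δ ^ 2) / (8 * b ^ 2))) 0 with htriv | hnontriv
  · simp [ENNReal.ofReal_of_nonpos htriv]
  have hn : 0 < n := Nat.pos_of_ne_zero fun h0 => by norm_num [h0] at hnontriv
  rcases isEmpty_or_nonempty ι with hι | hι
  · -- every `⨆` over the empty family is `0`, so `R = 0` and the event is certain
    have hR0 : R = 0 := by simp [hR]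
    simp [hR0, hδ, ENNReal.ofReal_le_one, Real.exp_nonneg]
  let S : Ω → Fin n → 𝒲 := fun ω i => W i ω
  have hS : Measurable S := measurable_pi_lambda _ hWmeas
  have hmap : P.map S = Measure.pi fun _ => ν := by
    rw [(iIndepFun_iff_map_fun_eq_pi_map fun i => (hWmeas i).aemeasurable).1 hWindep]
    simp only [hWlaw]
  have hRμ : R = ∫ x, empiricalRademacherComplexity h x ∂Measure.pi fun _ : Fin n => ν := by
    rw [hR, ← hmap, integral_map hS.aemeasurable (by
      rw [hmap]; exact (measurable_empiricalRademacherComplexity hmeas).aestronglyMeasurable)]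
    rfl
  have hT : MeasurableSet {x : Fin n → 𝒲 | uniformDeviation ν h x ≤ 2 * R + δ} :=
    measurableSet_le (measurable_uniformDeviation hmeas) measurable_const
  change _ ≤ P (S ⁻¹' {x | uniformDeviation ν h x ≤ 2 * R + δ})
  rw [← Measure.map_apply hS hT, hmap, hRμ]
  exact ENNReal.ofReal_le_of_le_toReal (le_measureReal_uniformDeviation_le ν hn hmeas hbound hδ)

/-- **Rademacher generalization bound (Theorem 3 of the paper's appendix).** For i.i.d. samples
`W 0, …, W (n-1)` with law `ν` and a countable family `h m : 𝒲 → ℝ` of measurable functions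
uniformly bounded by `b`, with probability at least `1 − 2 exp(−n δ² / (8 b²))` the uniform
deviation of empirical means from true means is at most twice the Rademacher complexity `R`
plus `δ`.  Here `R` is the expectation (over the sample and over independent uniform signs,
written as the explicit average over all sign patterns `s : Fin n → Bool`) of
`sup_m (1/n) ∑ i σ_i h m (W i)`. -/
theorem stmt_12 {Ω 𝒲 : Type*} [MeasurableSpace Ω] [MeasurableSpace 𝒲]
    (P : Measure Ω) [IsProbabilityMeasure P]
    (ν : Measure 𝒲) [IsProbabilityMeasure ν]
    {n : ℕ} (hn : 1 ≤ n)
    (W : Fin n → Ω → 𝒲)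
    (hWmeas : ∀ i, Measurable (W i))
    (hWindep : iIndepFun W P)
    (hWlaw : ∀ i, Measure.map (W i) P = ν)
    {ι : Type*} [Countable ι]
    (h : ι → 𝒲 → ℝ) (hmeas : ∀ m, Measurable (h m))
    (b : ℝ) (hb : 0 < b) (hbound : ∀ m w, |h m w| ≤ b)
    (R : ℝ)
    (hR : R = ∫ ω, ((1 : ℝ) / 2 ^ n) * ∑ s : Fin n → Bool,
      ⨆ m : ι, (1 / (n : ℝ)) * ∑ i, (if s i then (1 : ℝ) else -1) * h m (W i ω) ∂P) :
    ∀ δ : ℝ, 0 ≤ δ →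
      ENNReal.ofReal (1 - 2 * Real.exp (-(n * δ ^ 2) / (8 * b ^ 2))) ≤
        P {ω | ⨆ m : ι,
          |(1 / (n : ℝ)) * ∑ i, h m (W i ω) - ∫ w, h m w ∂ν| ≤ 2 * R + δ} :=
  stmt_12_general P ν W hWmeas hWindep hWlaw h hmeas b hbound R hR
end
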